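/- Let G be a triconed graph with no coloops, with the total edge order fixed as specified. Then every edge of G incident to the vertex 0 belongs to the minimum spanning tree B0; consequently the edge set of G_red equals E(G) \ B0. -/

import Mathlib

attribute [-instance] Sym2.instPartialOrder

open scoped Classical

variable {V : Type} [Fintype V] [LinearOrder V] [LinearOrder (Sym2 V)]

/-- `T` is a spanning tree of the graph `G`, viewed as a set of edges. -/
def IsSpanningTree (G : SimpleGraph V) (T : Set (Sym2 V)) : Prop :=
  T ⊆ G.edgeSet ∧ (SimpleGraph.fromEdgeSet T).IsTree

/-- An edge `e` of the spanning tree `T` is internally passive (w.r.t. the edge order). -/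
def InternallyPassive (G : SimpleGraph V) (T : Set (Sym2 V)) (e : Sym2 V) : Prop :=
  e ∈ T ∧ ∃ f ∈ G.edgeSet, f ∉ T ∧ f < e ∧ IsSpanningTree G (insert f (T \ {e}))

/-- The passivity of a spanning tree: the number of internally passive edges. -/
noncomputable def passivity (G : SimpleGraph V) (T : Set (Sym2 V)) : ℕ :=
  {e : Sym2 V | InternallyPassive G T e}.ncard

/-- `A` is lexicographically smaller than `B` as (sorted lists of) sets of edges:
the minimum of the symmetric difference lies in `A`. -/
def EdgeSetLexLt (A B : Set (Sym2 V)) : Prop :=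
  ∃ e, e ∈ A ∧ e ∉ B ∧ ∀ f, (f ∈ A ∧ f ∉ B) ∨ (f ∈ B ∧ f ∉ A) → f ≠ e → e < f

/-- `B0` is the minimum spanning tree of `G`: the spanning tree whose sorted edge
list is lexicographically smallest. -/
def IsMinSpanningTree (G : SimpleGraph V) (B0 : Set (Sym2 V)) : Prop :=
  IsSpanningTree G B0 ∧ ∀ T, IsSpanningTree G T → T ≠ B0 → EdgeSetLexLt B0 T

/-- `G` has no coloops: every edge lies outside some spanning tree. -/
def NoColoops (G : SimpleGraph V) : Prop :=
  ∀ e ∈ G.edgeSet, ∃ T, IsSpanningTree G T ∧ e ∉ T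

/-- `G` is a triconed graph with distinguished path `v1 - v0 - v2`. -/
def IsTriconed (G : SimpleGraph V) (v0 v1 v2 : V) : Prop :=
  G.Connected ∧ v0 ≠ v1 ∧ v0 ≠ v2 ∧ v1 ≠ v2 ∧ G.Adj v0 v1 ∧ G.Adj v0 v2 ∧
    ∀ v, v ≠ v0 → v ≠ v1 → v ≠ v2 → G.Adj v0 v ∨ G.Adj v1 v ∨ G.Adj v2 v

/-- The vertex order puts `v0 < v1 < v2` first, then the remaining neighbors of `v0`,
then the remaining vertices adjacent to `v1`, then the rest. -/
def VertexOrderSpec (G : SimpleGraph V) (v0 v1 v2 : V) : Prop :=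
  v0 < v1 ∧ v1 < v2 ∧
  (∀ v, v ≠ v0 → v ≠ v1 → v ≠ v2 → v2 < v) ∧
  (∀ u u', u ≠ v0 → u ≠ v1 → u ≠ v2 → u' ≠ v0 → u' ≠ v1 → u' ≠ v2 →
    G.Adj v0 u → ¬G.Adj v0 u' → u < u') ∧
  (∀ u u', u ≠ v0 → u ≠ v1 → u ≠ v2 → u' ≠ v0 → u' ≠ v1 → u' ≠ v2 →
    ¬G.Adj v0 u → ¬G.Adj v0 u' → G.Adj v1 u → ¬G.Adj v1 u' → u < u')

/-- Smaller endpoint of an edge. -/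
def sym2Min (e : Sym2 V) : V :=
  Sym2.lift ⟨fun a b => min a b, fun a b => min_comm a b⟩ e

/-- Larger endpoint of an edge. -/
def sym2Max (e : Sym2 V) : V :=
  Sym2.lift ⟨fun a b => max a b, fun a b => max_comm a b⟩ e

/-- Lexicographic comparison of edges by their endpoints. -/
def Sym2Lex (e f : Sym2 V) : Prop :=
  sym2Min e < sym2Min f ∨ (sym2Min e = sym2Min f ∧ sym2Max e < sym2Max f)

/-- The block of an edge in the specified edge ordering: edges at `v0` first, then edges
joining `v1` to height-2 vertices, then edges joining `v2` to height-2 vertices not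
adjacent to `v1`, then the remaining edges. -/
noncomputable def edgeBlock (G : SimpleGraph V) (v0 v1 v2 : V) (e : Sym2 V) : ℕ :=
  if v0 ∈ e then 0
  else if ∃ x, e = s(v1, x) ∧ ¬G.Adj v0 x then 1
  else if ∃ x, e = s(v2, x) ∧ ¬G.Adj v0 x ∧ ¬G.Adj v1 x then 2
  else 3

/-- The edge order respects the blocks, and is lexicographic within the first three blocks. -/
def EdgeOrderSpec (G : SimpleGraph V) (v0 v1 v2 : V) : Prop :=
  (∀ e ∈ G.edgeSet, ∀ f ∈ G.edgeSet,
      edgeBlock G v0 v1 v2 e < edgeBlock G v0 v1 v2 f → e < f) ∧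
  (∀ e ∈ G.edgeSet, ∀ f ∈ G.edgeSet,
      edgeBlock G v0 v1 v2 e = edgeBlock G v0 v1 v2 f → edgeBlock G v0 v1 v2 e ≤ 2 →
      Sym2Lex e f → e < f)

/-- The edges of `G_red`: edges of `G` not in `B0` and not incident to `v0`. -/
def GredEdges (G : SimpleGraph V) (v0 : V) (B0 : Set (Sym2 V)) : Set (Sym2 V) :=
  {e | e ∈ G.edgeSet ∧ e ∉ B0 ∧ v0 ∉ e}

/-- `u` is a child of `p` in the spanning tree `B0` rooted at `v0`:
`s(u,p) ∈ B0` and removing this edge disconnects `u` from the root. -/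
def IsChildOf (B0 : Set (Sym2 V)) (v0 : V) (u p : V) : Prop :=
  s(u, p) ∈ B0 ∧ ¬(SimpleGraph.fromEdgeSet (B0 \ {s(u, p)})).Reachable u v0

/-- The type of a vertex: `1` if it is `v1` or a child of `v1`, `2` if it is `v2` or a
child of `v2`, and `0` otherwise. -/
noncomputable def vType (B0 : Set (Sym2 V)) (v0 v1 v2 : V) (u : V) : ℕ :=
  if u = v1 ∨ IsChildOf B0 v0 u v1 then 1
  else if u = v2 ∨ IsChildOf B0 v0 u v2 then 2
  else 0

/-- The height of a vertex other than `v0`: `1` if adjacent to `v0`, `2` otherwise. -/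
noncomputable def vHeight (G : SimpleGraph V) (v0 : V) (u : V) : ℕ :=
  if G.Adj v0 u then 1 else 2

/-- `(E, m)` is a marked spanning forest of `G_red`: an acyclic set of `G_red`-edges
with marks on vertices, each vertex carrying at most one mark except type-2 vertices
which may carry two. -/
def IsMarkedForest (G : SimpleGraph V) (v0 v1 v2 : V) (B0 : Set (Sym2 V))
    (E : Set (Sym2 V)) (m : V → ℕ) : Prop :=
  E ⊆ GredEdges G v0 B0 ∧ (SimpleGraph.fromEdgeSet E).IsAcyclic ∧ m v0 = 0 ∧
  ∀ v, m v ≤ if vType B0 v0 v1 v2 v = 2 then 2 else 1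

/-- Total number of marks in the component of `u`. -/
noncomputable def compMarks (E : Set (Sym2 V)) (m : V → ℕ) (u : V) : ℕ :=
  ∑ x : V, if (SimpleGraph.fromEdgeSet E).Reachable u x then m x else 0

/-- Number of marks of type `t` in the component of `u` (the extra mark of a doubly
marked vertex counting as a mark of type `0`). -/
noncomputable def markTypeCount (B0 : Set (Sym2 V)) (v0 v1 v2 : V)
    (E : Set (Sym2 V)) (m : V → ℕ) (u : V) (t : ℕ) : ℕ :=
  ∑ x : V, if (SimpleGraph.fromEdgeSet E).Reachable u x then
      ((if 1 ≤ m x ∧ vType B0 v0 v1 v2 x = t then 1 else 0) +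
        (if m x = 2 ∧ t = 0 then 1 else 0))
    else 0

/-- The component of `u` in `(E, m)` is correctly marked. -/
def CorrectlyMarkedComp (B0 : Set (Sym2 V)) (v0 v1 v2 : V)
    (E : Set (Sym2 V)) (m : V → ℕ) (u : V) : Prop :=
  1 ≤ compMarks E m u ∧
  ((SimpleGraph.fromEdgeSet E).Reachable u v1 → 1 ≤ m v1) ∧
  ((SimpleGraph.fromEdgeSet E).Reachable u v2 → 1 ≤ m v2) ∧
  (∀ t, markTypeCount B0 v0 v1 v2 E m u t ≤ 1) ∧
  (∀ x, (SimpleGraph.fromEdgeSet E).Reachable u x → m x = 2 →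
    ∃ x', (SimpleGraph.fromEdgeSet E).Reachable u x' ∧ x' ≠ x ∧ 1 ≤ m x')

/-- The multiplicity of the blueprint edge `{a, b}`: the number of 2-components whose
marks have types `a` and `b`, plus (for `{a,b} ∈ {{0,1},{0,2}}`) the number of
3-components. -/
noncomputable def bpMult (B0 : Set (Sym2 V)) (v0 v1 v2 : V)
    (E : Set (Sym2 V)) (m : V → ℕ) (a b : ℕ) : ℕ :=
  {c : (SimpleGraph.fromEdgeSet E).ConnectedComponent |
    ∃ u, u ≠ v0 ∧ (SimpleGraph.fromEdgeSet E).connectedComponentMk u = c ∧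
      ((compMarks E m u = 2 ∧ a ≠ b ∧
          1 ≤ markTypeCount B0 v0 v1 v2 E m u a ∧ 1 ≤ markTypeCount B0 v0 v1 v2 E m u b) ∨
        (compMarks E m u = 3 ∧
          (({a, b} : Set ℕ) = {0, 1} ∨ ({a, b} : Set ℕ) = {0, 2})))}.ncard

/-- The blueprint (a multigraph on `{0,1,2}`) is acyclic. -/
def bpAcyclic (B0 : Set (Sym2 V)) (v0 v1 v2 : V) (E : Set (Sym2 V)) (m : V → ℕ) : Prop :=
  bpMult B0 v0 v1 v2 E m 0 1 ≤ 1 ∧ bpMult B0 v0 v1 v2 E m 0 2 ≤ 1 ∧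
  bpMult B0 v0 v1 v2 E m 1 2 ≤ 1 ∧
  ¬(1 ≤ bpMult B0 v0 v1 v2 E m 0 1 ∧ 1 ≤ bpMult B0 v0 v1 v2 E m 0 2 ∧
      1 ≤ bpMult B0 v0 v1 v2 E m 1 2)

/-- The vertices `a` and `b` of the blueprint lie in the same connected component. -/
def bpConnected (B0 : Set (Sym2 V)) (v0 v1 v2 : V) (E : Set (Sym2 V)) (m : V → ℕ)
    (a b : ℕ) : Prop :=
  a = b ∨ 1 ≤ bpMult B0 v0 v1 v2 E m a b ∨
    ∃ c, c ∈ ({0, 1, 2} : Set ℕ) ∧ c ≠ a ∧ c ≠ b ∧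
      1 ≤ bpMult B0 v0 v1 v2 E m a c ∧ 1 ≤ bpMult B0 v0 v1 v2 E m c b

/-- `(E, m)` is a trirooted forest of `G_red`. -/
def IsTriRootedForest (G : SimpleGraph V) (v0 v1 v2 : V) (B0 : Set (Sym2 V))
    (E : Set (Sym2 V)) (m : V → ℕ) : Prop :=
  IsMarkedForest G v0 v1 v2 B0 E m ∧
  (∀ u, u ≠ v0 → CorrectlyMarkedComp B0 v0 v1 v2 E m u) ∧
  bpAcyclic B0 v0 v1 v2 E m

/-- `v` receives the extra mark coming from the edge `02`: `02 ∈ B`, there is a path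
from `v2` to `v1` in `B` avoiding `02`, and `v` is the endpoint closer to `v2` of the
first edge of this path not in `B0`. -/
def DoublyMarkedAt (B0 B : Set (Sym2 V)) (v0 v1 v2 : V) (v : V) : Prop :=
  s(v0, v2) ∈ B ∧
  ∃ p : (SimpleGraph.fromEdgeSet B).Walk v2 v1, p.IsPath ∧ s(v0, v2) ∉ p.edges ∧
    ∃ i : ℕ, (∀ j < i, ∀ e, p.edges[j]? = some e → e ∈ B0) ∧
      (∃ e, p.edges[i]? = some e ∧ e ∉ B0) ∧ v = p.getVert i

/-- `(E, m)` is the marked spanning forest `φ₁(B)` associated to the spanning tree `B`. -/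
def IsPhi1 (G : SimpleGraph V) (v0 v1 v2 : V) (B0 B : Set (Sym2 V))
    (E : Set (Sym2 V)) (m : V → ℕ) : Prop :=
  E = B ∩ GredEdges G v0 B0 ∧
  (∀ v, m v ≤ 2) ∧
  (∀ v, 1 ≤ m v ↔ (v = v1 ∨ v = v2 ∨ ∃ p, IsChildOf B0 v0 v p ∧ s(v, p) ∈ B)) ∧
  (∀ v, m v = 2 ↔ DoublyMarkedAt B0 B v0 v1 v2 v)

/-- `(S, E)` is a (sub)tree of `G_red` with vertex set `S` and edge set `E`. -/
def IsSubTree (G : SimpleGraph V) (v0 : V) (B0 : Set (Sym2 V))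
    (S : Set V) (E : Set (Sym2 V)) : Prop :=
  S.Nonempty ∧ v0 ∉ S ∧ E ⊆ GredEdges G v0 B0 ∧
  (∀ e ∈ E, ∀ x ∈ e, x ∈ S) ∧
  (∀ u ∈ S, ∀ x ∈ S, (SimpleGraph.fromEdgeSet E).Reachable u x) ∧
  (SimpleGraph.fromEdgeSet E).IsAcyclic

/-- Total number of marks of the marked tree `(S, m)`. -/
noncomputable def treeTotalMarks (S : Set V) (m : V → ℕ) : ℕ :=
  ∑ x : V, if x ∈ S then m x else 0

/-- Number of marks of type `t` of the marked tree `(S, m)`. -/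
noncomputable def treeMarkTypeCount (B0 : Set (Sym2 V)) (v0 v1 v2 : V)
    (S : Set V) (m : V → ℕ) (t : ℕ) : ℕ :=
  ∑ x : V, if x ∈ S then
      ((if 1 ≤ m x ∧ vType B0 v0 v1 v2 x = t then 1 else 0) +
        (if m x = 2 ∧ t = 0 then 1 else 0))
    else 0

/-- `(S, E, m)` is a correctly marked tree of `G_red`. -/
def IsCorrectlyMarkedTree (G : SimpleGraph V) (v0 v1 v2 : V) (B0 : Set (Sym2 V))
    (S : Set V) (E : Set (Sym2 V)) (m : V → ℕ) : Prop :=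
  IsSubTree G v0 B0 S E ∧
  (∀ v, v ∉ S → m v = 0) ∧
  (∀ v, m v ≤ if vType B0 v0 v1 v2 v = 2 then 2 else 1) ∧
  1 ≤ treeTotalMarks S m ∧
  (v1 ∈ S → 1 ≤ m v1) ∧ (v2 ∈ S → 1 ≤ m v2) ∧
  (∀ t, treeMarkTypeCount B0 v0 v1 v2 S m t ≤ 1) ∧
  (∀ x ∈ S, m x = 2 → ∃ x' ∈ S, x' ≠ x ∧ 1 ≤ m x')

/-- Number of effective marks: marks at normal vertices together with the extra marks
of doubly marked vertices. -/
noncomputable def effMarks (v1 v2 : V) (S : Set V) (m : V → ℕ) : ℕ :=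
  treeTotalMarks S m -
    ((if v1 ∈ S ∧ 1 ≤ m v1 then 1 else 0) + (if v2 ∈ S ∧ 1 ≤ m v2 then 1 else 0))

/-- Number of passive effective marks: an effective mark is passive unless it is the
unique mark of the tree and lies at the smallest vertex of the tree. -/
noncomputable def passiveEffMarks (v1 v2 : V) (S : Set V) (m : V → ℕ) : ℕ :=
  effMarks v1 v2 S m -
    (if ∃ v ∈ S, v ≠ v1 ∧ v ≠ v2 ∧ 1 ≤ m v ∧ treeTotalMarks S m = 1 ∧ ∀ u ∈ S, v ≤ u
      then 1 else 0)

/-- Total excess `Σ_{e ∈ E} (w e - 1)` of the edge weights. -/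
noncomputable def excessWeightSum (E : Set (Sym2 V)) (w : Sym2 V → ℕ) : ℕ :=
  ∑ e : Sym2 V, if e ∈ E then w e - 1 else 0

/-- Excess weight of the weighted tree `(S, E, w)`. -/
noncomputable def excessWeight (v1 v2 : V) (S : Set V) (E : Set (Sym2 V))
    (w : Sym2 V → ℕ) : ℕ :=
  (if v1 ∈ S then 1 else 0) + (if v2 ∈ S then 1 else 0) + excessWeightSum E w

/-- Total weight `Σ_{e ∈ E} w e`, i.e. the total degree of the associated monomial. -/
noncomputable def totalWeight (E : Set (Sym2 V)) (w : Sym2 V → ℕ) : ℕ :=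
  ∑ e : Sym2 V, if e ∈ E then w e else 0

/-- All pairs of weighted objects of the weighted tree `(S, E, w)` are compatible:
the endpoints of the smallest path containing any two weighted objects have
different types. -/
def WeightedObjectsCompatible (B0 : Set (Sym2 V)) (v0 v1 v2 : V)
    (S : Set V) (E : Set (Sym2 V)) (w : Sym2 V → ℕ) : Prop :=
  (∀ vsp ∈ ({v1, v2} : Set V), vsp ∈ S → ∀ x y, s(x, y) ∈ E → 2 ≤ w s(x, y) →
      (SimpleGraph.fromEdgeSet (E \ {s(x, y)})).Reachable vsp x →
      vType B0 v0 v1 v2 vsp ≠ vType B0 v0 v1 v2 y) ∧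
  (∀ x y p q, s(x, y) ∈ E → s(p, q) ∈ E → s(x, y) ≠ s(p, q) →
      2 ≤ w s(x, y) → 2 ≤ w s(p, q) →
      (SimpleGraph.fromEdgeSet (E \ {s(x, y)})).Reachable x p →
      (SimpleGraph.fromEdgeSet (E \ {s(p, q)})).Reachable p x →
      vType B0 v0 v1 v2 y ≠ vType B0 v0 v1 v2 q) ∧
  (∀ x y, s(x, y) ∈ E → 3 ≤ w s(x, y) → vType B0 v0 v1 v2 x ≠ vType B0 v0 v1 v2 y)

/-- `(S, E, w)` is a correctly weighted tree of `G_red`. -/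
def IsCorrectlyWeightedTree (G : SimpleGraph V) (v0 v1 v2 : V) (B0 : Set (Sym2 V))
    (S : Set V) (E : Set (Sym2 V)) (w : Sym2 V → ℕ) : Prop :=
  IsSubTree G v0 B0 S E ∧
  (∀ e ∈ E, 1 ≤ w e) ∧
  excessWeight v1 v2 S E w ≤ 3 ∧
  (2 ≤ excessWeight v1 v2 S E w → WeightedObjectsCompatible B0 v0 v1 v2 S E w) ∧
  (∀ x y, s(x, y) ∈ E → w s(x, y) ≤ vHeight G v0 x + vHeight G v0 y) ∧
  (∀ x y, s(x, y) ∈ E → w s(x, y) = vHeight G v0 x + vHeight G v0 y →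
    ∀ e ∈ E, e ≠ s(x, y) → w e ≤ 2)

/-- `s(v, x)` is the edge incident to `v` on the unique path from `v` to `u` in the
tree with edge set `E`. -/
def PathFirstEdge (E : Set (Sym2 V)) (v u : V) (x : V) : Prop :=
  s(v, x) ∈ E ∧ ¬(SimpleGraph.fromEdgeSet (E \ {s(v, x)})).Reachable v u

/-- `z` lies on the (unique) path between `a` and `b` in the forest with edge set `E`. -/
def OnPathBetween (E : Set (Sym2 V)) (a b z : V) : Prop :=
  ∃ p : (SimpleGraph.fromEdgeSet E).Walk a b, p.IsPath ∧ z ∈ p.support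

/-- `s(x, y)` (with `x` nearer `z`, `y` nearer `v`) is the first edge along the path
from the sandwiched mark `z` towards `v` whose endpoint closer to `v` has type
different from that of `wv` and whose endpoint closer to `wv` has type different
from that of `v`. -/
def SandwichEdge (B0 : Set (Sym2 V)) (v0 v1 v2 : V) (E : Set (Sym2 V))
    (z v wv : V) (x y : V) : Prop :=
  s(x, y) ∈ E ∧
  ¬(SimpleGraph.fromEdgeSet (E \ {s(x, y)})).Reachable z v ∧
  (SimpleGraph.fromEdgeSet (E \ {s(x, y)})).Reachable z x ∧
  vType B0 v0 v1 v2 y ≠ vType B0 v0 v1 v2 wv ∧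
  vType B0 v0 v1 v2 x ≠ vType B0 v0 v1 v2 v ∧
  ∀ x' y', s(x', y') ∈ E →
    ¬(SimpleGraph.fromEdgeSet (E \ {s(x', y')})).Reachable z x →
    (SimpleGraph.fromEdgeSet (E \ {s(x', y')})).Reachable z x' →
    (vType B0 v0 v1 v2 y' = vType B0 v0 v1 v2 wv ∨ vType B0 v0 v1 v2 x' = vType B0 v0 v1 v2 v)

/-- `w` is the weighting `φ₂(S, E, m)` produced by the empowerment algorithm applied
to the correctly marked tree `(S, E, m)` (only the weights of edges of `E` are
constrained). -/
def IsPhi2 (B0 : Set (Sym2 V)) (v0 v1 v2 : V)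
    (S : Set V) (E : Set (Sym2 V)) (m : V → ℕ) (w : Sym2 V → ℕ) : Prop :=
  (treeTotalMarks S m = 1 →
    ∃ v ∈ S, m v = 1 ∧
      (((∀ u ∈ S, v ≤ u) ∧ ∀ e ∈ E, w e = 1) ∨
        (¬(∀ u ∈ S, v ≤ u) ∧ ∃ u0 ∈ S, (∀ u ∈ S, u0 ≤ u) ∧
          ∃ x, PathFirstEdge E v u0 x ∧ ∀ e ∈ E, w e = if e = s(v, x) then 2 else 1))) ∧
  (treeTotalMarks S m = 2 →
    ∃ v ∈ S, ∃ u ∈ S, v ≠ u ∧ m v = 1 ∧ m u = 1 ∧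
      ∃ x y, PathFirstEdge E v u x ∧ PathFirstEdge E u v y ∧
        ∀ e ∈ E, w e = 1 + (if v ≠ v1 ∧ v ≠ v2 ∧ e = s(v, x) then 1 else 0)
                        + (if u ≠ v1 ∧ u ≠ v2 ∧ e = s(u, y) then 1 else 0)) ∧
  (treeTotalMarks S m = 3 →
    ((∃ a ∈ S, ∃ b ∈ S, ∃ c ∈ S, a ≠ b ∧ a ≠ c ∧ b ≠ c ∧ m a = 1 ∧ m b = 1 ∧ m c = 1 ∧
        ¬OnPathBetween E b c a ∧ ¬OnPathBetween E a c b ∧ ¬OnPathBetween E a b c ∧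
        ∃ xa xb xc, PathFirstEdge E a b xa ∧ PathFirstEdge E b a xb ∧
          PathFirstEdge E c a xc ∧
          ∀ e ∈ E, w e = 1 + (if a ≠ v1 ∧ a ≠ v2 ∧ e = s(a, xa) then 1 else 0)
                          + (if b ≠ v1 ∧ b ≠ v2 ∧ e = s(b, xb) then 1 else 0)
                          + (if c ≠ v1 ∧ c ≠ v2 ∧ e = s(c, xc) then 1 else 0)) ∨
      (∃ v ∈ S, ∃ wv ∈ S, ∃ z ∈ S, v ≠ wv ∧ v ≠ z ∧ 1 ≤ m v ∧ 1 ≤ m wv ∧ 1 ≤ m z ∧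
        OnPathBetween E v wv z ∧ (z = wv → m wv = 2) ∧
        (z ≠ wv → m v = 1 ∧ m wv = 1 ∧ m z = 1) ∧
        vType B0 v0 v1 v2 v < vType B0 v0 v1 v2 wv ∧
        ∃ xv xw xz yz, PathFirstEdge E v wv xv ∧ PathFirstEdge E wv v xw ∧
          SandwichEdge B0 v0 v1 v2 E z v wv xz yz ∧
          ∀ e ∈ E, w e = 1 + (if v ≠ v1 ∧ v ≠ v2 ∧ e = s(v, xv) then 1 else 0)
                          + (if wv ≠ v1 ∧ wv ≠ v2 ∧ e = s(wv, xw) then 1 else 0)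
                          + (if e = s(xz, yz) then 1 else 0))))

/-- The vertex set of the component of `u` in the forest with edge set `E`. -/
def compVerts (E : Set (Sym2 V)) (u : V) : Set V :=
  {x | (SimpleGraph.fromEdgeSet E).Reachable u x}

/-- The edge set of the component of `u` in the forest with edge set `E`. -/
def compEdges (E : Set (Sym2 V)) (u : V) : Set (Sym2 V) :=
  {e | e ∈ E ∧ ∀ x ∈ e, (SimpleGraph.fromEdgeSet E).Reachable u x}

/-- `w` is the weighting `φ₂(E, m)` of the marked forest `(E, m)`, obtained by applying
the empowerment algorithm to every component. -/
def IsPhi2Forest (B0 : Set (Sym2 V)) (v0 v1 v2 : V)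
    (E : Set (Sym2 V)) (m : V → ℕ) (w : Sym2 V → ℕ) : Prop :=
  ∀ u, u ≠ v0 → IsPhi2 B0 v0 v1 v2 (compVerts E u) (compEdges E u)
      (fun v => if v ∈ compVerts E u then m v else 0) w

/-- `(h_0, …, h_r)` is a pure O-sequence. -/
def IsPureOSeq (r : ℕ) (h : ℕ → ℕ) : Prop :=
  ∃ (σ : Type) (_ : Finite σ) (X : Set (σ →₀ ℕ)),
    X.Finite ∧
    (∀ μ ∈ X, ∀ ν : σ →₀ ℕ, ν ≤ μ → ν ∈ X) ∧
    (∀ μ ∈ X, ∀ ν ∈ X, (∀ ρ ∈ X, μ ≤ ρ → ρ = μ) → (∀ ρ ∈ X, ν ≤ ρ → ρ = ν) →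
        μ.sum (fun _ n => n) = ν.sum (fun _ n => n)) ∧
    (∀ i, {μ ∈ X | μ.sum (fun _ n => n) = i}.ncard = if i ≤ r then h i else 0)

private lemma reachable_mono_adj_aux {W : Type} {H H' : SimpleGraph W}
    (h : ∀ x y, H.Adj x y → H'.Reachable x y) {a b : W} (hr : H.Reachable a b) :
    H'.Reachable a b := by
  obtain ⟨p⟩ := hr
  induction p with
  | nil => exact SimpleGraph.Reachable.refl _
  | cons ha _ ih => exact (h _ _ ha).trans ih

section Statements

variable (G : SimpleGraph V) (v0 v1 v2 : V) (B0 : Set (Sym2 V))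

theorem statement5
    (hG : IsTriconed G v0 v1 v2)
    (hvo : VertexOrderSpec G v0 v1 v2)
    (heo : EdgeOrderSpec G v0 v1 v2)
    (hnc : NoColoops G)
    (hB0 : IsMinSpanningTree G B0) :
    (∀ e ∈ G.edgeSet, v0 ∈ e → e ∈ B0) ∧ GredEdges G v0 B0 = G.edgeSet \ B0 := by
  classical
  obtain ⟨⟨hBsub, htree⟩, hmin⟩ := hB0
  have hconn := htree.isConnected
  have hac := htree.IsAcyclic
  have key : ∀ e ∈ G.edgeSet, v0 ∈ e → e ∈ B0 := by
    intro e he hv0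
    by_contra heB
    -- e = s(v0, u)
    set u : V := Sym2.Mem.other hv0 with hu_def
    have heq : s(v0, u) = e := Sym2.other_spec hv0
    have hadj : G.Adj v0 u := by rw [← SimpleGraph.mem_edgeSet, heq]; exact he
    have huv0 : u ≠ v0 := hadj.ne'
    -- a path from u to v0 in the tree B0
    obtain ⟨w⟩ := hconn.preconnected u v0
    obtain ⟨p, hp⟩ : ∃ p : (SimpleGraph.fromEdgeSet B0).Walk u v0, p.IsPath :=
      ⟨w.toPath.1, w.toPath.2⟩
    obtain ⟨b, hadj_ub, q, rfl⟩ := SimpleGraph.Walk.exists_eq_cons_of_ne huv0 p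
    rw [SimpleGraph.fromEdgeSet_adj] at hadj_ub
    have hfB : s(u, b) ∈ B0 := hadj_ub.1
    set f : Sym2 V := s(u, b) with hf_def
    have hbv0 : b ≠ v0 := by
      rintro rfl
      apply heB
      rw [← heq, Sym2.eq_swap]
      exact hfB
    have hq_path : q.IsPath := hp.of_cons
    have hf_not_q : f ∉ q.edges := by
      have hnd := hp.edges_nodup
      rw [SimpleGraph.Walk.edges_cons, List.nodup_cons] at hnd
      exact hnd.1
    have hef : e ≠ f := by
      intro h
      apply heB
      rw [h]; exact hfB
    -- removing f from B0 disconnects u from v0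
    have hnr : ¬ (SimpleGraph.fromEdgeSet (B0 \ {f})).Reachable u v0 := by
      rintro ⟨r⟩
      have hre : ∀ g ∈ r.edges, g ∈ (SimpleGraph.fromEdgeSet B0).edgeSet := by
        intro g hg
        have h1 := r.edges_subset_edgeSet hg
        rw [SimpleGraph.edgeSet_fromEdgeSet] at h1 ⊢
        exact ⟨h1.1.1, h1.2⟩
      have hfr' : f ∉ (r.transfer _ hre).edges := by
        rw [SimpleGraph.Walk.edges_transfer]
        intro hg
        have h1 := r.edges_subset_edgeSet hg
        rw [SimpleGraph.edgeSet_fromEdgeSet] at h1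
        exact h1.1.2 rfl
      have huniq := hac.path_unique ⟨SimpleGraph.Walk.cons
        ((SimpleGraph.fromEdgeSet_adj _).mpr hadj_ub) q, hp⟩ (r.transfer _ hre).toPath
      apply hfr'
      apply SimpleGraph.Walk.edges_toPath_subset
      rw [← huniq]
      exact List.mem_cons_self
    -- the competing spanning tree T
    set T : Set (Sym2 V) := insert e (B0 \ {f}) with hT_def
    have heT : e ∈ T := Set.mem_insert _ _
    have hfT : f ∉ T := by
      rintro (h | h)
      · exact hef h.symm
      · exact h.2 rfl
    have hTsub : T ⊆ G.edgeSet := by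
      rintro g (h | h)
      · rwa [h]
      · exact hBsub h.1
    have hTes : (SimpleGraph.fromEdgeSet T).edgeSet = T := by
      rw [SimpleGraph.edgeSet_fromEdgeSet]
      ext g
      constructor
      · exact fun h => h.1
      · intro h
        exact ⟨h, G.not_isDiag_of_mem_edgeSet (hTsub h)⟩
    -- u and b are connected in T
    have hadj_uv0T : (SimpleGraph.fromEdgeSet T).Adj u v0 := by
      rw [SimpleGraph.fromEdgeSet_adj]
      refine ⟨?_, huv0⟩
      rw [Sym2.eq_swap, heq]
      exact heT
    have hreach_v0b : (SimpleGraph.fromEdgeSet T).Reachable v0 b := by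
      have hq : ∀ g ∈ q.edges, g ∈ (SimpleGraph.fromEdgeSet T).edgeSet := by
        intro g hg
        rw [hTes]
        have hgB := q.edges_subset_edgeSet hg
        rw [SimpleGraph.edgeSet_fromEdgeSet] at hgB
        exact Set.mem_insert_of_mem _ ⟨hgB.1, fun h => hf_not_q (h ▸ hg)⟩
      exact ⟨(q.transfer _ hq).reverse⟩
    have hreach_ub : (SimpleGraph.fromEdgeSet T).Reachable u b :=
      hadj_uv0T.reachable.trans hreach_v0b
    -- T is connected
    have hTconn : (SimpleGraph.fromEdgeSet T).Connected := by
      rw [SimpleGraph.connected_iff]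
      refine ⟨fun a c => ?_, ⟨v0⟩⟩
      refine reachable_mono_adj_aux ?_ (hconn.preconnected a c)
      intro x y hxy
      rw [SimpleGraph.fromEdgeSet_adj] at hxy
      by_cases hxyf : s(x, y) = f
      · rw [hf_def, Sym2.eq_iff] at hxyf
        rcases hxyf with ⟨rfl, rfl⟩ | ⟨rfl, rfl⟩
        · exact hreach_ub
        · exact hreach_ub.symm
      · refine SimpleGraph.Adj.reachable ?_
        rw [SimpleGraph.fromEdgeSet_adj]
        exact ⟨Set.mem_insert_of_mem _ ⟨hxy.1, hxyf⟩, hxy.2⟩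
    -- T is acyclic
    have hTac : (SimpleGraph.fromEdgeSet T).IsAcyclic := by
      intro a c hc
      by_cases hec : e ∈ c.edges
      · -- cycle through e gives reachability avoiding e, hence avoiding f in B0
        have hkey : (SimpleGraph.fromEdgeSet T).Adj v0 u ∧
            ((SimpleGraph.fromEdgeSet T) \ SimpleGraph.fromEdgeSet {s(v0, u)}).Reachable v0 u := by
          apply SimpleGraph.adj_and_reachable_delete_edges_iff_exists_cycle.mpr
          exact ⟨a, c, hc, by rwa [heq]⟩
        apply hnr
        refine reachable_mono_adj_aux ?_ hkey.2.symm
        intro x y hxy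
        rw [SimpleGraph.sdiff_adj] at hxy
        obtain ⟨hxy1, hxy2⟩ := hxy
        rw [SimpleGraph.fromEdgeSet_adj] at hxy1
        have hxye : s(x, y) ≠ e := by
          intro h
          apply hxy2
          rw [SimpleGraph.fromEdgeSet_adj]
          refine ⟨by rw [h, heq]; exact rfl, hxy1.2⟩
        have hxyT : s(x, y) ∈ B0 \ {f} := by
          rcases hxy1.1 with h | h
          · exact absurd h hxye
          · exact h
        refine SimpleGraph.Adj.reachable ?_
        rw [SimpleGraph.fromEdgeSet_adj]
        exact ⟨hxyT, hxy1.2⟩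
      · -- cycle avoiding e lives in B0
        have hce : ∀ g ∈ c.edges, g ∈ (SimpleGraph.fromEdgeSet B0).edgeSet := by
          intro g hg
          have h1 := c.edges_subset_edgeSet hg
          rw [hTes] at h1
          rw [SimpleGraph.edgeSet_fromEdgeSet]
          rcases h1 with h | h
          · exact absurd (h ▸ hg) hec
          · exact ⟨h.1, (G.not_isDiag_of_mem_edgeSet (hBsub h.1))⟩
        exact hac (c.transfer _ hce) (hc.transfer _)
    -- T is a spanning tree distinct from B0
    have hTsp : IsSpanningTree G T := ⟨hTsub, ⟨hTconn, hTac⟩⟩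
    have hTne : T ≠ B0 := fun h => heB (h ▸ heT)
    obtain ⟨g, hgB, hgT, hgmin⟩ := hmin T hTsp hTne
    have hgf : g = f := by
      by_contra hgf
      apply hgT
      rcases (by tauto : g = e ∨ g ≠ e) with h | h
      · exact absurd (h ▸ hgB) heB
      · exact Set.mem_insert_of_mem _ ⟨hgB, hgf⟩
    have hfe : f < e := hgf ▸ hgmin e (Or.inr ⟨heT, heB⟩) (fun h => hef (h.trans hgf))
    -- but the edge order puts e (block 0) before f (positive block)
    have hefo : e < f := by
      apply heo.1 e he f (hBsub (hgf ▸ hgB))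
      have h0 : edgeBlock G v0 v1 v2 e = 0 := by
        unfold edgeBlock
        rw [if_pos hv0]
      have hv0f : v0 ∉ f := by
        intro hmem
        rcases Sym2.mem_iff.mp hmem with h | h
        · exact huv0 h.symm
        · exact hbv0 h.symm
      have h1 : 0 < edgeBlock G v0 v1 v2 f := by
        unfold edgeBlock
        rw [if_neg hv0f]
        split_ifs <;> omega
      omega
    exact absurd hfe (asymm hefo)
  refine ⟨key, ?_⟩
  ext g
  simp only [GredEdges, Set.mem_setOf_eq, Set.mem_diff]
  constructor
  · rintro ⟨h1, h2, _⟩; exact ⟨h1, h2⟩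
  · rintro ⟨h1, h2⟩; exact ⟨h1, h2, fun hv => h2 (key g h1 hv)⟩

end Statements
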